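/- For all â, b̂ ∈ ℝ, the matrix exponential of the source matrix B(â,b̂) equals the explicit matrix Exp(â,b̂): exp(B(â,b̂)) = Exp(â,b̂). -/

import Mathlib

noncomputable section

/-- The source matrix `B(a,b)` of the Ten-Moment body-force source term. -/
def srcB (a b : ℝ) : Matrix (Fin 6) (Fin 6) ℝ :=
  !![0, 0, 0, 0, 0, 0;
     a, 0, 0, 0, 0, 0;
     b, 0, 0, 0, 0, 0;
     0, a, 0, 0, 0, 0;
     0, b / 2, a / 2, 0, 0, 0;
     0, 0, b, 0, 0, 0]

/-- The explicit exponential matrix of the source operator. -/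
def ExpM (a b : ℝ) : Matrix (Fin 6) (Fin 6) ℝ :=
  !![1, 0, 0, 0, 0, 0;
     a, 1, 0, 0, 0, 0;
     b, 0, 1, 0, 0, 0;
     a ^ 2 / 2, a, 0, 1, 0, 0;
     a * b / 2, b / 2, a / 2, 0, 1, 0;
     b ^ 2 / 2, 0, b, 0, 0, 1]

/-! `B(a,b)` is nilpotent with `B³ = 0`, so the exponential series stops at `1 + B + B²/2`. -/

open Nat in
theorem NormedSpace.exp_eq_sum_range_of_pow_eq_zero (𝕂 : Type*) {𝔸 : Type*} [Field 𝕂]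
    [CharZero 𝕂] [Ring 𝔸] [Algebra 𝕂 𝔸] [TopologicalSpace 𝔸] [IsTopologicalRing 𝔸]
    {x : 𝔸} {n : ℕ} (h : x ^ n = 0) :
    NormedSpace.exp x = ∑ k ∈ Finset.range n, (k !⁻¹ : 𝕂) • x ^ k := by
  rw [NormedSpace.exp_eq_tsum 𝕂]
  refine tsum_eq_sum fun k hk => ?_
  rw [Finset.mem_range, not_lt] at hk
  rw [pow_eq_zero_of_le hk h, smul_zero]

theorem srcB_sq (a b : ℝ) :
    srcB a b ^ 2 =
      !![0, 0, 0, 0, 0, 0;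
         0, 0, 0, 0, 0, 0;
         0, 0, 0, 0, 0, 0;
         a ^ 2, 0, 0, 0, 0, 0;
         a * b, 0, 0, 0, 0, 0;
         b ^ 2, 0, 0, 0, 0, 0] := by
  ext i j
  fin_cases i <;> fin_cases j <;> simp [sq, srcB, Matrix.mul_apply, Fin.sum_univ_succ]
  all_goals ring

theorem srcB_pow_three (a b : ℝ) : srcB a b ^ 3 = 0 := by
  rw [pow_succ, srcB_sq]
  ext i j
  fin_cases i <;> fin_cases j <;> simp [srcB, Matrix.mul_apply, Fin.sum_univ_succ]

/-- The matrix exponential of the source matrix `B(â,b̂)` is the explicit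
matrix `Exp(â,b̂)`. -/
theorem exp_srcB_eq_expM (a b : ℝ) :
    NormedSpace.exp (srcB a b) = ExpM a b := by
  rw [NormedSpace.exp_eq_sum_range_of_pow_eq_zero ℝ (srcB_pow_three a b)]
  simp only [Finset.sum_range_succ, Finset.sum_range_zero, srcB_sq]
  ext i j
  fin_cases i <;> fin_cases j <;> simp [srcB, ExpM]
  all_goals ring
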